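/- Let g : ℝ^{n×p} → ℝ be a convex function that is Lipschitz continuous with constant L ≥ 0 (with respect to the Frobenius norm), and let σ > 0. Then the Moreau envelope env_{σ,g} is continuously (Fréchet) differentiable on ℝ^{n×p}, and its gradient is given by ∇env_{σ,g}(X) = (1/σ)·(X − prox_{σ,g}(X)) for every X ∈ ℝ^{n×p}. -/

import Mathlib

/-!
The proximal point `u = prox X` is characterised, through the convexity of `g`, by the
variational inequality `σ⁻¹ ⟪X - u, V - u⟫ ≤ g V - g u`. Adding it at two points shows that
`prox` is firmly nonexpansive, hence `1`-Lipschitz, and that `G X = σ⁻¹ (X - prox X)` is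
monotone. Testing the envelope at `Y` with the competitor `prox X` gives
`env Y - env X ≤ ⟪G X, Y - X⟫ + ‖Y - X‖² / (2σ)`; exchanging `X` and `Y` and using monotonicity
of `G` gives the matching lower bound, so `env` is differentiable with gradient `G`, which is
continuous. The Frobenius norm is induced by the inner product `tr (Aᵀ B)`, so all of this
applies to matrices.
-/

open Matrix

attribute [local instance]
  Matrix.frobeniusSeminormedAddCommGroup
  Matrix.frobeniusNormedAddCommGroup
  Matrix.frobeniusNormedSpace

/-- The Moreau envelope of `g` with smoothing parameter `σ`. -/
noncomputable def moreauEnv {n p : ℕ} (g : Matrix (Fin n) (Fin p) ℝ → ℝ) (σ : ℝ)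
    (X : Matrix (Fin n) (Fin p) ℝ) : ℝ :=
  ⨅ Y : Matrix (Fin n) (Fin p) ℝ, (g Y + 1 / (2 * σ) * ‖Y - X‖ ^ 2)

/-- The linear functional `H ↦ tr(Gᵀ H) = ⟨G, H⟩` (Frobenius inner product with `G`). -/
noncomputable def traceForm {n p : ℕ} (G : Matrix (Fin n) (Fin p) ℝ) :
    Matrix (Fin n) (Fin p) ℝ →ₗ[ℝ] ℝ where
  toFun H := (Gᵀ * H).trace
  map_add' Y Z := by simp [Matrix.mul_add]
  map_smul' c Y := by simp [Matrix.mul_smul]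

open Filter Asymptotics Set RealInnerProductSpace Topology

theorem hasFDerivAt_of_norm_sub_le_mul_sq {𝕜 E F : Type*} [NontriviallyNormedField 𝕜]
    [NormedAddCommGroup E] [NormedSpace 𝕜 E] [NormedAddCommGroup F] [NormedSpace 𝕜 F]
    {f : E → F} {f' : E →L[𝕜] F} {x : E} (C : ℝ)
    (hf : ∀ y, ‖f y - f x - f' (y - x)‖ ≤ C * ‖y - x‖ ^ 2) : HasFDerivAt f f' x := by
  rw [hasFDerivAt_iff_isLittleO_nhds_zero]
  refine (IsBigO.of_bound C (Eventually.of_forall fun h => ?_)).trans_isLittleO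
    (isLittleO_norm_pow_id one_lt_two)
  simpa using hf (x + h)

section Proximal

variable {E : Type*} [NormedAddCommGroup E]

noncomputable def moreauEnvelope (g : E → ℝ) (σ : ℝ) (X : E) : ℝ :=
  ⨅ Y, (g Y + 1 / (2 * σ) * ‖Y - X‖ ^ 2)

def IsProximalMap (g : E → ℝ) (σ : ℝ) (prox : E → E) : Prop :=
  ∀ X Z, g (prox X) + 1 / (2 * σ) * ‖prox X - X‖ ^ 2 ≤ g Z + 1 / (2 * σ) * ‖Z - X‖ ^ 2

namespace IsProximalMap

variable {g : E → ℝ} {σ : ℝ} {prox : E → E}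

theorem moreauEnvelope_eq (h : IsProximalMap g σ prox) (X : E) :
    moreauEnvelope g σ X = g (prox X) + 1 / (2 * σ) * ‖prox X - X‖ ^ 2 :=
  (IsLeast.isGLB ⟨mem_range_self (prox X), forall_mem_range.2 (h X)⟩).ciInf_eq

variable [InnerProductSpace ℝ E]

theorem moreauEnvelope_sub_le (h : IsProximalMap g σ prox) (X Y : E) :
    moreauEnvelope g σ Y - moreauEnvelope g σ X ≤
      ⟪σ⁻¹ • (X - prox X), Y - X⟫ + 1 / (2 * σ) * ‖Y - X‖ ^ 2 := by
  have hY : moreauEnvelope g σ Y ≤ g (prox X) + 1 / (2 * σ) * ‖prox X - Y‖ ^ 2 :=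
    h.moreauEnvelope_eq Y ▸ h Y (prox X)
  have hsq : ‖prox X - Y‖ ^ 2 = ‖prox X - X‖ ^ 2 - 2 * ⟪prox X - X, Y - X⟫ + ‖Y - X‖ ^ 2 := by
    rw [← norm_sub_sq_real, sub_sub_sub_cancel_right]
  have hinner : ⟪σ⁻¹ • (X - prox X), Y - X⟫ = -σ⁻¹ * ⟪prox X - X, Y - X⟫ := by
    rw [real_inner_smul_left, ← neg_sub, inner_neg_left]; ring
  rw [hsq] at hY
  rw [h.moreauEnvelope_eq X, hinner]
  linear_combination hY

theorem inner_le_sub_add_mul (h : IsProximalMap g σ prox) (hg : ConvexOn ℝ univ g)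
    (X V : E) {t : ℝ} (ht₀ : 0 < t) (ht₁ : t ≤ 1) :
    σ⁻¹ * ⟪X - prox X, V - prox X⟫ ≤ g V - g (prox X) + t / (2 * σ) * ‖V - prox X‖ ^ 2 := by
  set u := prox X
  set w := V - u
  have hconv : g (u + t • w) ≤ (1 - t) * g u + t * g V := by
    have := hg.2 (mem_univ u) (mem_univ V) (sub_nonneg.2 ht₁) ht₀.le (by ring)
    rwa [show (1 - t) • u + t • V = u + t • w by module] at this
  have hmin : g u + 1 / (2 * σ) * ‖u - X‖ ^ 2 ≤
      g (u + t • w) + 1 / (2 * σ) * ‖u + t • w - X‖ ^ 2 := h X _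
  rw [show u + t • w - X = (u - X) + t • w by abel, norm_add_sq_real, inner_smul_right,
    norm_smul, mul_pow, Real.norm_eq_abs, sq_abs] at hmin
  have hflip : ⟪X - u, w⟫ = -⟪u - X, w⟫ := by rw [← neg_sub, inner_neg_left]
  rw [hflip]
  refine le_of_mul_le_mul_left ?_ ht₀
  linear_combination hmin + hconv

theorem inner_le_sub (h : IsProximalMap g σ prox) (hg : ConvexOn ℝ univ g) (X V : E) :
    σ⁻¹ * ⟪X - prox X, V - prox X⟫ ≤ g V - g (prox X) := by
  have hlim : Tendsto (fun t : ℝ => g V - g (prox X) + t / (2 * σ) * ‖V - prox X‖ ^ 2)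
      (𝓝[>] 0) (𝓝 (g V - g (prox X))) := by
    refine tendsto_nhdsWithin_of_tendsto_nhds ?_
    simpa using ((continuous_id.div_const (2 * σ)).mul continuous_const).const_add
      (g V - g (prox X)) |>.tendsto 0
  refine ge_of_tendsto hlim ?_
  filter_upwards [Ioc_mem_nhdsGT zero_lt_one] with t ht
  exact h.inner_le_sub_add_mul hg X V ht.1 ht.2

theorem norm_sub_sq_le_inner (h : IsProximalMap g σ prox) (hg : ConvexOn ℝ univ g)
    (hσ : 0 < σ) (X Y : E) : ‖prox Y - prox X‖ ^ 2 ≤ ⟪Y - X, prox Y - prox X⟫ := by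
  have hX := h.inner_le_sub hg X (prox Y)
  have hY := h.inner_le_sub hg Y (prox X)
  have hsum : ⟪X - prox X, prox Y - prox X⟫ + ⟪Y - prox Y, prox X - prox Y⟫ =
      ‖prox Y - prox X‖ ^ 2 - ⟪Y - X, prox Y - prox X⟫ := by
    rw [← neg_sub (prox Y) (prox X), inner_neg_right, ← sub_eq_add_neg, ← inner_sub_left,
      ← real_inner_self_eq_norm_sq, ← inner_sub_left]
    congr 1; abel
  have : σ⁻¹ * (‖prox Y - prox X‖ ^ 2 - ⟪Y - X, prox Y - prox X⟫) ≤ 0 := by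
    rw [← hsum]; linarith
  exact sub_nonpos.1 (nonpos_of_mul_nonpos_right this (inv_pos.2 hσ))

theorem lipschitzWith_one (h : IsProximalMap g σ prox) (hg : ConvexOn ℝ univ g)
    (hσ : 0 < σ) : LipschitzWith 1 prox := by
  refine LipschitzWith.mk_one fun Y X => ?_
  rw [dist_eq_norm, dist_eq_norm]
  have := (h.norm_sub_sq_le_inner hg hσ X Y).trans (real_inner_le_norm _ _)
  nlinarith [norm_nonneg (prox Y - prox X), norm_nonneg (Y - X)]

theorem inner_sub_sub_nonneg (h : IsProximalMap g σ prox) (hg : ConvexOn ℝ univ g)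
    (hσ : 0 < σ) (X Y : E) : 0 ≤ ⟪(Y - prox Y) - (X - prox X), Y - X⟫ := by
  have hnonexp : ⟪prox Y - prox X, Y - X⟫ ≤ ‖Y - X‖ ^ 2 := by
    calc ⟪prox Y - prox X, Y - X⟫ ≤ ‖prox Y - prox X‖ * ‖Y - X‖ := real_inner_le_norm _ _
      _ ≤ ‖Y - X‖ * ‖Y - X‖ := by
        gcongr; simpa [dist_eq_norm] using (h.lipschitzWith_one hg hσ).dist_le_mul Y X
      _ = ‖Y - X‖ ^ 2 := (sq _).symm
  rw [sub_sub_sub_comm, inner_sub_left, real_inner_self_eq_norm_sq]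
  linarith

theorem abs_moreauEnvelope_sub_sub_inner_le (h : IsProximalMap g σ prox)
    (hg : ConvexOn ℝ univ g) (hσ : 0 < σ) (X Y : E) :
    |moreauEnvelope g σ Y - moreauEnvelope g σ X - ⟪σ⁻¹ • (X - prox X), Y - X⟫| ≤
      1 / (2 * σ) * ‖Y - X‖ ^ 2 := by
  have hupper := h.moreauEnvelope_sub_le X Y
  have hlower := h.moreauEnvelope_sub_le Y X
  have hmono : 0 ≤ ⟪σ⁻¹ • (Y - prox Y), Y - X⟫ - ⟪σ⁻¹ • (X - prox X), Y - X⟫ := by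
    rw [← inner_sub_left, ← smul_sub, real_inner_smul_left]
    exact mul_nonneg (inv_nonneg.2 hσ.le) (h.inner_sub_sub_nonneg hg hσ X Y)
  rw [← neg_sub Y X, inner_neg_right, norm_neg] at hlower
  rw [abs_le]
  constructor <;> linarith

theorem hasFDerivAt_moreauEnvelope (h : IsProximalMap g σ prox) (hg : ConvexOn ℝ univ g) (hσ : 0 < σ)
    (X : E) : HasFDerivAt (moreauEnvelope g σ) (innerSL ℝ (σ⁻¹ • (X - prox X))) X :=
  hasFDerivAt_of_norm_sub_le_mul_sq _ fun Y => by
    simpa only [Real.norm_eq_abs, innerSL_apply_apply] using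
      h.abs_moreauEnvelope_sub_sub_inner_le hg hσ X Y

theorem contDiff_moreauEnvelope (h : IsProximalMap g σ prox) (hg : ConvexOn ℝ univ g)
    (hσ : 0 < σ) : ContDiff ℝ 1 (moreauEnvelope g σ) := by
  refine contDiff_one_iff_fderiv.2 ⟨fun X => (h.hasFDerivAt_moreauEnvelope hg hσ X).differentiableAt, ?_⟩
  rw [funext fun X => (h.hasFDerivAt_moreauEnvelope hg hσ X).fderiv]
  exact (innerSL ℝ).continuous.comp
    (continuous_id.sub (h.lipschitzWith_one hg hσ).continuous |>.const_smul σ⁻¹)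

end IsProximalMap
end Proximal

namespace Matrix

variable {m n : Type*} [Fintype m] [Fintype n]

theorem frobenius_norm_sq_eq_trace (A : Matrix m n ℝ) : ‖A‖ ^ 2 = (Aᵀ * A).trace := by
  -- the Frobenius norm is the `L²` norm of the vector of `L²` norms of the rows
  change ‖WithLp.toLp 2 fun i => WithLp.toLp 2 (A i)‖ ^ 2 = _
  simp [PiLp.norm_sq_eq_of_L2, Matrix.trace, Matrix.mul_apply, ← sq]
  rw [Finset.sum_comm]

noncomputable abbrev frobeniusInnerProductSpace : InnerProductSpace ℝ (Matrix m n ℝ) where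
  inner A B := (Aᵀ * B).trace
  norm_sq_eq_re_inner := frobenius_norm_sq_eq_trace
  conj_inner_symm A B := by
    simp only [conj_trivial]; rw [← trace_transpose, transpose_mul, transpose_transpose]
  add_left A B C := by simp [Matrix.add_mul]
  smul_left A B r := by simp

end Matrix

attribute [local instance] Matrix.frobeniusInnerProductSpace

theorem innerSL_eq_traceForm {n p : ℕ} (G : Matrix (Fin n) (Fin p) ℝ) :
    innerSL ℝ G = LinearMap.toContinuousLinearMap (traceForm G) :=
  rfl

theorem moreau_envelope_differentiable_general {n p : ℕ} (g : Matrix (Fin n) (Fin p) ℝ → ℝ)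
    (hconv : ConvexOn ℝ Set.univ g)
    (σ : ℝ) (hσ : 0 < σ)
    (prox : Matrix (Fin n) (Fin p) ℝ → Matrix (Fin n) (Fin p) ℝ)
    (hprox : ∀ X Z : Matrix (Fin n) (Fin p) ℝ,
      g (prox X) + 1 / (2 * σ) * ‖prox X - X‖ ^ 2 ≤ g Z + 1 / (2 * σ) * ‖Z - X‖ ^ 2) :
    ContDiff ℝ 1 (moreauEnv g σ) ∧
    ∀ X : Matrix (Fin n) (Fin p) ℝ,
      HasFDerivAt (moreauEnv g σ)
        (LinearMap.toContinuousLinearMap (traceForm (σ⁻¹ • (X - prox X)))) X := by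
  have h : IsProximalMap g σ prox := hprox
  refine ⟨h.contDiff_moreauEnvelope hconv hσ, fun X => ?_⟩
  rw [← innerSL_eq_traceForm]
  exact h.hasFDerivAt_moreauEnvelope hconv hσ X

/-- If `g` is convex and `L`-Lipschitz and `σ > 0`, then the Moreau envelope
`env_{σ,g}` is continuously (Fréchet) differentiable, with gradient (w.r.t. the Frobenius
inner product) `∇env_{σ,g}(X) = (1/σ)·(X − prox_{σ,g}(X))`, where `prox` is the proximal
operator, i.e. the global minimizer of `Y ↦ g(Y) + (1/(2σ))‖Y − X‖_F²`. -/
theorem moreau_envelope_differentiable {n p : ℕ} (g : Matrix (Fin n) (Fin p) ℝ → ℝ) (L : ℝ)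
    (hL : 0 ≤ L) (hconv : ConvexOn ℝ Set.univ g)
    (hlip : ∀ X Y : Matrix (Fin n) (Fin p) ℝ, |g X - g Y| ≤ L * ‖X - Y‖)
    (σ : ℝ) (hσ : 0 < σ)
    (prox : Matrix (Fin n) (Fin p) ℝ → Matrix (Fin n) (Fin p) ℝ)
    (hprox : ∀ X Z : Matrix (Fin n) (Fin p) ℝ,
      g (prox X) + 1 / (2 * σ) * ‖prox X - X‖ ^ 2 ≤ g Z + 1 / (2 * σ) * ‖Z - X‖ ^ 2) :
    ContDiff ℝ 1 (moreauEnv g σ) ∧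
    ∀ X : Matrix (Fin n) (Fin p) ℝ,
      HasFDerivAt (moreauEnv g σ)
        (LinearMap.toContinuousLinearMap (traceForm (σ⁻¹ • (X - prox X)))) X :=
  moreau_envelope_differentiable_general g hconv σ hσ prox hprox
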